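/- If x = (x₁,…,xₙ) ∈ ℝⁿ satisfies ⊞_{i∈[n]} x_i = 0 (the n-ary operation), then for every natural number p, Σ_{i∈[n]} x_i^{2p+1} = 0. -/

import Mathlib

open Filter Finset

/-- The binary idempotent operation `⊞`. -/
noncomputable def bop (a b : ℝ) : ℝ :=
  if |b| < |a| then a else if |a| < |b| then b else (a + b) / 2

/-- The unique real `(2p+1)`-th root of `t`. -/
noncomputable def oddRoot (p : ℕ) (t : ℝ) : ℝ :=
  Real.sign t * |t| ^ ((1 : ℝ) / (2 * (p : ℝ) + 1))

/-- `ξ_I[u](α) = Card{i ∈ I : u i = α} − Card{i ∈ I : u i = −α}`. -/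
noncomputable def xiMap {ι : Type*} (I : Finset ι) (u : ι → ℝ) (α : ℝ) : ℤ :=
  ((I.filter fun i => u i = α).card : ℤ) - ((I.filter fun i => u i = -α).card : ℤ)

/-- The residual index set `J_I(u)`. -/
noncomputable def resid {ι : Type*} (I : Finset ι) (u : ι → ℝ) : Finset ι :=
  I.filter fun i => xiMap I u (u i) ≠ 0

/-- The `n`-ary extension `⊞_{i ∈ I} u i` of the binary operation `⊞`. -/
noncomputable def Fop {ι : Type*} (I : Finset ι) (u : ι → ℝ) : ℝ :=
  if h : (resid I u).Nonempty then
    if 0 < xiMap I u ((resid I u).sup' h fun i => |u i|) then (resid I u).sup' h u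
    else if xiMap I u ((resid I u).sup' h fun i => |u i|) < 0 then (resid I u).inf' h u
    else 0
  else 0

/-- The Chebyshev norm `max_{i ∈ [n]} |x i|`. -/
noncomputable def chebNorm {n : ℕ} (x : Fin n → ℝ) : ℝ := ⨆ i, |x i|

/-- The ultrametric distance `d_⊞(x,y) = max_i |x_i ⊟ y_i|`. -/
noncomputable def dB {n : ℕ} (x y : Fin n → ℝ) : ℝ := ⨆ i, |bop (x i) (-(y i))|

/-!
If the residual set `J(u)` were nonempty, the value of largest modulus `α` occurring in it would be
unbalanced, `ξ[u](α) ≠ 0`, and `⊞ u` would be pushed to at least `α > 0` or at most `-α < 0`.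
So `⊞ u = 0` forces `ξ[u] ≡ 0`: every value occurs exactly as often as its negative, the multiset
of values is symmetric, and any odd function, such as `t ↦ t ^ (2p+1)`, sums to zero over it.
-/

section ResidualIndexSet

variable {ι : Type*} (I : Finset ι) (u : ι → ℝ)

lemma xiMap_neg (α : ℝ) : xiMap I u (-α) = -xiMap I u α := by
  simp only [xiMap, neg_neg]
  ring

lemma xiMap_zero : xiMap I u 0 = 0 := by
  have h := xiMap_neg I u 0
  rw [neg_zero] at h
  omega

lemma exists_mem_resid_of_xiMap_pos {α : ℝ} (h : 0 < xiMap I u α) :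
    ∃ i ∈ resid I u, u i = α := by
  have hcard : 0 < (I.filter fun i => u i = α).card := by
    unfold xiMap at h
    omega
  obtain ⟨i, hi⟩ := Finset.card_pos.mp hcard
  obtain ⟨hiI, hiα⟩ := Finset.mem_filter.mp hi
  exact ⟨i, Finset.mem_filter.mpr ⟨hiI, hiα ▸ h.ne'⟩, hiα⟩

lemma resid_nonempty_of_xiMap_ne_zero {α : ℝ} (h : xiMap I u α ≠ 0) :
    (resid I u).Nonempty := by
  rcases h.lt_or_gt with hneg | hpos
  · obtain ⟨i, hi, -⟩ := exists_mem_resid_of_xiMap_pos I u (α := -α) (by rw [xiMap_neg]; omega)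
    exact ⟨i, hi⟩
  · obtain ⟨i, hi, -⟩ := exists_mem_resid_of_xiMap_pos I u hpos
    exact ⟨i, hi⟩

lemma Fop_ne_zero_of_resid_nonempty (hJ : (resid I u).Nonempty) : Fop I u ≠ 0 := by
  obtain ⟨j, hjJ, hjα⟩ := Finset.exists_mem_eq_sup' hJ fun i => |u i|
  set α := (resid I u).sup' hJ fun i => |u i|
  have hξj : xiMap I u (u j) ≠ 0 := (Finset.mem_filter.mp hjJ).2
  have hξα : xiMap I u α ≠ 0 := by
    rcases abs_choice (u j) with h | h
    · rwa [hjα, h]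
    · rw [hjα, h, xiMap_neg]
      exact neg_ne_zero.mpr hξj
  have hα : 0 < α := by
    refine (hjα ▸ abs_nonneg (u j)).lt_of_ne fun h0 => hξα ?_
    rw [← h0, xiMap_zero]
  rcases hξα.lt_or_gt with hneg | hpos
  · obtain ⟨i, hiJ, hiα⟩ :=
      exists_mem_resid_of_xiMap_pos I u (α := -α) (by rw [xiMap_neg]; omega)
    have hFop : Fop I u = (resid I u).inf' hJ u := by
      rw [Fop, dif_pos hJ, if_neg hneg.not_gt, if_pos hneg]
    have := Finset.inf'_le u hiJ
    rw [hFop]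
    linarith
  · obtain ⟨i, hiJ, hiα⟩ := exists_mem_resid_of_xiMap_pos I u hpos
    have hFop : Fop I u = (resid I u).sup' hJ u := by
      rw [Fop, dif_pos hJ, if_pos hpos]
    have := Finset.le_sup' u hiJ
    rw [hFop]
    linarith

lemma xiMap_eq_zero_of_Fop_eq_zero (h : Fop I u = 0) (α : ℝ) : xiMap I u α = 0 := by
  by_contra hα
  exact Fop_ne_zero_of_resid_nonempty I u (resid_nonempty_of_xiMap_ne_zero I u hα) h

lemma map_neg_val_map_of_xiMap_eq_zero (hξ : ∀ α, xiMap I u α = 0) :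
    (I.val.map u).map Neg.neg = I.val.map u := by
  classical
  have hcount : ∀ α, (I.val.map u).count α = (I.filter fun i => u i = α).card := by
    intro α
    simp only [Multiset.count_map, Finset.card_def, Finset.filter_val, eq_comm]
  ext α
  rw [← neg_neg α, Multiset.count_map_eq_count' _ _ neg_injective, hcount, hcount]
  have := hξ (-α)
  unfold xiMap at this
  omega

theorem sum_odd_eq_zero_of_xiMap_eq_zero (hξ : ∀ α, xiMap I u α = 0) {f : ℝ → ℝ}
    (hf : ∀ t, f (-t) = -f t) : ∑ i ∈ I, f (u i) = 0 := by
  have hsymm := map_neg_val_map_of_xiMap_eq_zero I u hξ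
  have key : ((I.val.map u).map f).sum = -((I.val.map u).map f).sum := by
    conv_lhs => rw [← hsymm]
    rw [Multiset.map_map, ← Multiset.sum_map_neg]
    exact congrArg Multiset.sum (Multiset.map_congr rfl fun t _ => hf t)
  rw [Finset.sum_eq_multiset_sum, ← Function.comp_def f u, ← Multiset.map_map f u]
  linarith

end ResidualIndexSet

/-- if the limit sum is zero then every generalized sum is zero. -/
theorem stmt12 (n : ℕ) (x : Fin n → ℝ) (h : Fop Finset.univ x = 0) (p : ℕ) :
    ∑ i, x i ^ (2 * p + 1) = 0 :=
  sum_odd_eq_zero_of_xiMap_eq_zero _ x (xiMap_eq_zero_of_Fop_eq_zero _ x h)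
    (f := (· ^ (2 * p + 1))) fun t => Odd.neg_pow ⟨p, rfl⟩ t
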